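/- arXiv:2312.11471 — 4 statements merged into one kernel-verified Lean document; each statement's English description precedes it below -/
import Mathlib

section
/- Suppose g : ℝ³ → ℝ³ is bounded and continuous, and V : ℝ³ → ℝ has continuous first-order partial derivatives such that for some B ≥ 0 the following hold on the region ‖u‖ ≥ B: (i) V(u) ≥ a(‖u‖), where a is a continuous increasing function defined for r ≥ B with a(B) > 0 and a(r) → ∞ as r → ∞; (ii) the derivative of V along the unforced system u' = -C̃u + W̃f(u), namely ∇V(u)·(-C̃u + W̃f(u)), is at most -b(‖u‖), where b is an increasing function defined for r ≥ B with b(B) > 0; (iii) ‖∇V(u)‖ ≤ c(‖u‖), where c is defined for r ≥ B and there exists μ > 0 with 0 < c(r) ≤ μ·b(r) for all r ≥ B. Then there exists λ₀ > 0 such that for every nonzero λ with |λ| ≤ λ₀, the outputs of the response network y' = -C̃y + W̃f(y) + λg(x(t)) are uniformly ultimately bounded: there exists B₀ > 0, and for every γ > 0 there exists T(γ) > 0, such that ‖α‖ ≤ γ implies that for each chaotic output x(t) of the drive and each t₀ ≥ 0, ‖φ_x(t,t₀,α)‖ < B₀ for every t ≥ t₀ + T(γ). -/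
open Real

noncomputable section

local notation "E" => EuclideanSpace ℝ (Fin 3)

/-- The drive HNN vector field `-C x + W f(x) + I`, with `C = diagonal c` (componentwise). -/
def driveField (c : Fin 3 → ℝ) (W : Matrix (Fin 3) (Fin 3) ℝ) (I : E) (u : E) : E :=
  WithLp.toLp 2 (fun i => -(c i * u i) + (∑ j, W i j * Real.tanh (u j)) + I i)

/-- `x` is a solution (output) of the drive HNN `x' = -Cx + W f(x) + I`. -/
def IsDriveSol (c : Fin 3 → ℝ) (W : Matrix (Fin 3) (Fin 3) ℝ) (I : E) (x : ℝ → E) : Prop :=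
  ∀ t, HasDerivAt x (driveField c W I (x t)) t

/-- A chaotic output of the drive: a solution whose initial point lies in `Λx`. -/
def IsChaoticOutput (c : Fin 3 → ℝ) (W : Matrix (Fin 3) (Fin 3) ℝ) (I : E) (Λx : Set E)
    (x : ℝ → E) : Prop :=
  IsDriveSol c W I x ∧ x 0 ∈ Λx

/-- The unforced vector field `-C̃ u + W̃ f(u)` of the response network without driving. -/
def unforcedField (ct : Fin 3 → ℝ) (Wt : Matrix (Fin 3) (Fin 3) ℝ) (u : E) : E :=
  WithLp.toLp 2 (fun i => -(ct i * u i) + (∑ j, Wt i j * Real.tanh (u j)))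

/-- The response HNN vector field `-C̃ y + W̃ f(y) + λ g(xv)`, with `C̃ = diagonal ct`. -/
def respField (ct : Fin 3 → ℝ) (Wt : Matrix (Fin 3) (Fin 3) ℝ) (lam : ℝ) (g : E → E)
    (xv y : E) : E :=
  WithLp.toLp 2 (fun i => -(ct i * y i) + (∑ j, Wt i j * Real.tanh (y j)) + lam * g xv i)

/-- `y` is a solution of the response HNN `y' = -C̃y + W̃ f(y) + λ g(x(t))` driven by `x`. -/
def IsRespSol (ct : Fin 3 → ℝ) (Wt : Matrix (Fin 3) (Fin 3) ℝ) (lam : ℝ) (g : E → E)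
    (x : ℝ → E) (y : ℝ → E) : Prop :=
  ∀ t, HasDerivAt y (respField ct Wt lam g (x t) (y t)) t


/-- Real-analysis decay lemma: if `h' ≤ -D` whenever `h > L` on `[s,t]`, then
`h t ≤ max L (h s - D (t - s))`. -/
lemma ultimate_decay (h h' : ℝ → ℝ) (hd : ∀ r, HasDerivAt h (h' r) r)
    (s t L D : ℝ) (hst : s ≤ t) (hD : 0 ≤ D)
    (hder : ∀ r, s ≤ r → r ≤ t → L < h r → h' r ≤ -D) :
    h t ≤ max L (h s - D * (t - s)) := by
  by_contra hcon
  push_neg at hcon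
  rw [max_lt_iff] at hcon
  obtain ⟨hL, hdec⟩ := hcon
  have hcont : Continuous h :=
    continuous_iff_continuousAt.2 fun r => (hd r).continuousAt
  have anti : ∀ p, s ≤ p → p ≤ t → (∀ r, p < r → r < t → L < h r) →
      h t + D * t ≤ h p + D * p := by
    intro p hsp hpt hgt
    have hψd : ∀ x : ℝ, HasDerivAt (fun r => h r + D * r) (h' x + D) x := by
      intro x
      exact (hd x).add (by simpa using (hasDerivAt_id x).const_mul D)
    have := antitoneOn_of_deriv_nonpos (convex_Icc p t)
      (Continuous.continuousOn (by continuity))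
      (fun x hx => ((hψd x).differentiableAt).differentiableWithinAt)
      (fun x hx => by
        rw [interior_Icc] at hx
        rw [(hψd x).deriv]
        have := hder x (hsp.trans hx.1.le) hx.2.le (hgt x hx.1 hx.2)
        linarith)
    exact this (Set.left_mem_Icc.2 hpt) (Set.right_mem_Icc.2 hpt) hpt
  set A : Set ℝ := {r | r ∈ Set.Icc s t ∧ h r ≤ L} with hA
  rcases A.eq_empty_or_nonempty with hAe | hAne
  · have hgt : ∀ r, s ≤ r → r ≤ t → L < h r := by
      intro r h1 h2
      by_contra hle
      exact Set.eq_empty_iff_forall_notMem.1 hAe r ⟨⟨h1, h2⟩, not_lt.1 hle⟩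
    have := anti s le_rfl hst (fun r h1 h2 => hgt r h1.le h2.le)
    nlinarith
  · have hAclosed : IsClosed A := by
      have : A = Set.Icc s t ∩ h ⁻¹' (Set.Iic L) := rfl
      rw [this]
      exact isClosed_Icc.inter (isClosed_Iic.preimage hcont)
    have hAbdd : BddAbove A := BddAbove.mono (fun r hr => hr.1) (bddAbove_Icc)
    have hpA : sSup A ∈ A := hAclosed.csSup_mem hAne hAbdd
    have hsp : s ≤ sSup A := hpA.1.1
    have hpt : sSup A ≤ t := hpA.1.2
    have hgt : ∀ r, sSup A < r → r < t → L < h r := by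
      intro r h1 h2
      by_contra hle
      have : r ∈ A := ⟨⟨hsp.trans h1.le, h2.le⟩, not_lt.1 hle⟩
      exact absurd (le_csSup hAbdd this) (not_le.2 h1)
    have := anti (sSup A) hsp hpt hgt
    nlinarith [hpA.2, mul_nonneg hD (sub_nonneg.2 hpt)]

/-- Theorem 1 of the paper.  If `g` is bounded and continuous and `V` is a
`C¹` Lyapunov function satisfying, on the region `‖u‖ ≥ B`:
(i) `V(u) ≥ a(‖u‖)` with `a` continuous, increasing, `a(B) > 0` and `a(r) → ∞`;
(ii) the derivative of `V` along the unforced system is at most `-b(‖u‖)` with `b`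
increasing and `b(B) > 0`;
(iii) `‖∇V(u)‖ ≤ cfun(‖u‖)` with `0 < cfun r ≤ μ · b r` for all `r ≥ B` and some `μ > 0`;
then there is `lam₀ > 0` such that for every nonzero `λ` with `|λ| ≤ lam₀` the outputs of the
response network are uniformly ultimately bounded. -/
theorem uniform_ultimate_boundedness_of_response
    (c ct : Fin 3 → ℝ) (hc : ∀ i, 0 < c i) (hct : ∀ i, 0 < ct i)
    (W Wt : Matrix (Fin 3) (Fin 3) ℝ) (I : E)
    (Λx : Set E) (hΛx_compact : IsCompact Λx)
    (hΛx_inv : ∀ x : ℝ → E, IsDriveSol c W I x → x 0 ∈ Λx → ∀ t, 0 ≤ t → x t ∈ Λx)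
    (g : E → E) (hg_cont : Continuous g) (Mg : ℝ) (hg_bdd : ∀ v, ‖g v‖ ≤ Mg)
    (V : E → ℝ) (hV : ContDiff ℝ 1 V)
    (B : ℝ) (hB : 0 ≤ B)
    (a b cfun : ℝ → ℝ) (μ : ℝ) (hμ : 0 < μ)
    (ha_cont : ContinuousOn a (Set.Ici B)) (ha_mono : StrictMonoOn a (Set.Ici B))
    (haB : 0 < a B) (ha_top : Filter.Tendsto a Filter.atTop Filter.atTop)
    (hb_mono : StrictMonoOn b (Set.Ici B)) (hbB : 0 < b B)
    (hi : ∀ u : E, B ≤ ‖u‖ → a ‖u‖ ≤ V u)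
    (hii : ∀ u : E, B ≤ ‖u‖ → fderiv ℝ V u (unforcedField ct Wt u) ≤ -b ‖u‖)
    (hiii : ∀ u : E, B ≤ ‖u‖ → ‖fderiv ℝ V u‖ ≤ cfun ‖u‖)
    (hcb : ∀ r, B ≤ r → 0 < cfun r ∧ cfun r ≤ μ * b r) :
    ∃ lam₀ > (0 : ℝ), ∀ lam : ℝ, lam ≠ 0 → |lam| ≤ lam₀ →
      ∃ B₀ > (0 : ℝ), ∀ γ > (0 : ℝ), ∃ T > (0 : ℝ), ∀ α : E, ‖α‖ ≤ γ →
        ∀ x : ℝ → E, IsChaoticOutput c W I Λx x → ∀ t₀ : ℝ, 0 ≤ t₀ →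
          ∀ y : ℝ → E, IsRespSol ct Wt lam g x y → y t₀ = α →
            ∀ t, t₀ + T ≤ t → ‖y t‖ < B₀ := by
  classical
  have hMg0 : 0 ≤ Mg := le_trans (norm_nonneg _) (hg_bdd 0)
  have hM'pos : 0 < max Mg 1 := lt_of_lt_of_le one_pos (le_max_right _ _)
  refine ⟨1 / (2 * μ * max Mg 1), by positivity, ?_⟩
  intro lam hlam0 hlam
  have hlamμ : |lam| * (μ * Mg) ≤ 1 / 2 := by
    have h1 : |lam| * (μ * Mg) ≤ (1 / (2 * μ * max Mg 1)) * (μ * max Mg 1) := by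
      apply mul_le_mul hlam (by nlinarith [le_max_left Mg 1]) (by positivity) (by positivity)
    have h2 : (1 / (2 * μ * max Mg 1)) * (μ * max Mg 1) = 1 / 2 := by
      field_simp
    linarith
  have hVd : Differentiable ℝ V := hV.differentiable one_ne_zero
  have hVc : Continuous V := hVd.continuous
  obtain ⟨L0, hL0⟩ : ∃ L0, ∀ u : EuclideanSpace ℝ (Fin 3), ‖u‖ ≤ B → V u ≤ L0 := by
    obtain ⟨z, _, hzmax⟩ := (isCompact_closedBall (0 : EuclideanSpace ℝ (Fin 3)) B).exists_isMaxOn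
      ⟨0, by simp [hB]⟩ hVc.continuousOn
    exact ⟨V z, fun u hu => hzmax (by simpa [Metric.mem_closedBall, dist_eq_norm] using hu)⟩
  obtain ⟨R, hR⟩ := Filter.eventually_atTop.1 ((Filter.tendsto_atTop.1 ha_top) (L0 + 1))
  have hB₀pos : (0 : ℝ) < max R (B + 1) := lt_of_lt_of_le (by linarith) (le_max_right _ _)
  have hB₀B : B ≤ max R (B + 1) := le_trans (by linarith) (le_max_right _ _)
  have haB₀ : L0 < a (max R (B + 1)) := lt_of_lt_of_le (by linarith) (hR _ (le_max_left _ _))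
  refine ⟨max R (B + 1), hB₀pos, ?_⟩
  intro γ hγ
  obtain ⟨Mγ, hMγ⟩ : ∃ M, ∀ u : EuclideanSpace ℝ (Fin 3), ‖u‖ ≤ γ → V u ≤ M := by
    obtain ⟨z, _, hzmax⟩ := (isCompact_closedBall (0 : EuclideanSpace ℝ (Fin 3)) γ).exists_isMaxOn
      ⟨0, by simp [hγ.le]⟩ hVc.continuousOn
    exact ⟨V z, fun u hu => hzmax (by simpa [Metric.mem_closedBall, dist_eq_norm] using hu)⟩
  have hD : (0 : ℝ) < b B / 2 := by linarith
  have hT : (0 : ℝ) < max 1 ((Mγ - L0) / (b B / 2)) := lt_of_lt_of_le one_pos (le_max_left _ _)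
  refine ⟨max 1 ((Mγ - L0) / (b B / 2)), hT, ?_⟩
  intro α hα x hx t₀ ht₀ y hy hyt₀ t ht
  -- key pointwise derivative estimate
  have key : ∀ (u xv : EuclideanSpace ℝ (Fin 3)), B ≤ ‖u‖ →
      fderiv ℝ V u (respField ct Wt lam g xv u) ≤ -(b B / 2) := by
    intro u xv hu
    have hresp : respField ct Wt lam g xv u = unforcedField ct Wt u + lam • g xv := by
      ext i
      simp [respField, unforcedField, PiLp.add_apply, PiLp.smul_apply, smul_eq_mul]
    rw [hresp, map_add, map_smul, smul_eq_mul]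
    have h1 := hii u hu
    have hc0 : 0 < cfun ‖u‖ := (hcb ‖u‖ hu).1
    have h2 : |((fderiv ℝ V u) (g xv))| ≤ cfun ‖u‖ * Mg := by
      rw [← Real.norm_eq_abs]
      exact le_trans ((fderiv ℝ V u).le_opNorm _)
        (mul_le_mul (hiii u hu) (hg_bdd xv) (norm_nonneg _) hc0.le)
    have h3 : cfun ‖u‖ ≤ μ * b ‖u‖ := (hcb ‖u‖ hu).2
    have hbu : b B ≤ b ‖u‖ :=
      hb_mono.monotoneOn (Set.mem_Ici.2 le_rfl) (Set.mem_Ici.2 hu) hu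
    have h4 : lam * ((fderiv ℝ V u) (g xv)) ≤ |lam| * (cfun ‖u‖ * Mg) := by
      calc lam * ((fderiv ℝ V u) (g xv)) ≤ |lam * ((fderiv ℝ V u) (g xv))| := le_abs_self _
        _ = |lam| * |((fderiv ℝ V u) (g xv))| := abs_mul _ _
        _ ≤ |lam| * (cfun ‖u‖ * Mg) := mul_le_mul_of_nonneg_left h2 (abs_nonneg _)
    have h5 : |lam| * (cfun ‖u‖ * Mg) ≤ (1 / 2) * b ‖u‖ := by
      have hb1 : |lam| * (cfun ‖u‖ * Mg) ≤ |lam| * (μ * b ‖u‖ * Mg) := by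
        apply mul_le_mul_of_nonneg_left _ (abs_nonneg _)
        exact mul_le_mul_of_nonneg_right h3 hMg0
      have hb2 : |lam| * (μ * b ‖u‖ * Mg) = (|lam| * (μ * Mg)) * b ‖u‖ := by ring
      nlinarith [hbB, hbu]
    linarith
  -- the Lyapunov function along the trajectory
  have hd : ∀ r, HasDerivAt (fun r => V (y r))
      (fderiv ℝ V (y r) (respField ct Wt lam g (x r) (y r))) r :=
    fun r => (hVd (y r)).hasFDerivAt.comp_hasDerivAt r (hy r)
  have hder : ∀ r, t₀ ≤ r → r ≤ t → L0 < V (y r) →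
      fderiv ℝ V (y r) (respField ct Wt lam g (x r) (y r)) ≤ -(b B / 2) := by
    intro r _ _ hgt
    have hu : B ≤ ‖y r‖ := by
      by_contra hc
      exact absurd (hL0 _ (not_le.1 hc).le) (not_le.2 hgt)
    exact key _ _ hu
  have htt₀ : t₀ ≤ t := le_trans (by linarith) ht
  have hmain := ultimate_decay (fun r => V (y r)) _ hd t₀ t L0 (b B / 2) htt₀ hD.le hder
  have hht0 : V (y t₀) ≤ Mγ := by
    rw [hyt₀]; exact hMγ α hα
  have hDT : Mγ - L0 ≤ (b B / 2) * max 1 ((Mγ - L0) / (b B / 2)) := by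
    have := le_max_right 1 ((Mγ - L0) / (b B / 2))
    have h6 : (Mγ - L0) / (b B / 2) * (b B / 2) = Mγ - L0 := div_mul_cancel₀ _ (ne_of_gt hD)
    nlinarith
  have hDt : (b B / 2) * max 1 ((Mγ - L0) / (b B / 2)) ≤ (b B / 2) * (t - t₀) :=
    mul_le_mul_of_nonneg_left (by linarith) hD.le
  have hfinal : V (y t) ≤ L0 := by
    refine le_trans hmain (max_le le_rfl ?_)
    linarith
  by_contra hge
  push_neg at hge
  have hyB : B ≤ ‖y t‖ := hB₀B.trans hge
  have h7 : a (max R (B + 1)) ≤ a ‖y t‖ :=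
    ha_mono.monotoneOn (Set.mem_Ici.2 hB₀B) (Set.mem_Ici.2 hyB) hge
  have h8 := hi (y t) hyB
  linarith
end
end

section
/- Let P be an invertible real 3×3 matrix, let M > 0, and let Λ ⊂ ℝ³ be a set such that ‖x‖ ≤ M for every x ∈ Λ. Define g : ℝ³ → ℝ³ by g(x) = P·(tanh(x₁), tanh(x₂), tanh(x₃))ᵀ. Then for every x, x̄ ∈ Λ one has ‖g(x) - g(x̄)‖ ≥ L‖x - x̄‖ with the positive constant L = sech²(M)/‖P⁻¹‖; in particular, there exists L > 0 such that assumption (A), namely ‖g(x) - g(x̄)‖ ≥ L‖x - x̄‖ for all x, x̄ ∈ Λ, is fulfilled. -/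
open Real

noncomputable section

local notation "E" => EuclideanSpace ℝ (Fin 3)

/-- The spectral (ℓ²-operator) norm of a real 3×3 matrix. -/
def specNorm (A : Matrix (Fin 3) (Fin 3) ℝ) : ℝ :=
  ‖Matrix.toEuclideanCLM (𝕜 := ℝ) A‖

/-- The hyperbolic secant. -/
def sech (t : ℝ) : ℝ := 1 / Real.cosh t

lemma hasDerivAt_tanh' (x : ℝ) : HasDerivAt Real.tanh (1 / Real.cosh x ^ 2) x := by
  have h := (Real.hasDerivAt_sinh x).div (Real.hasDerivAt_cosh x) (Real.cosh_pos x).ne'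
  have he : ∀ y, Real.tanh y = Real.sinh y / Real.cosh y := Real.tanh_eq_sinh_div_cosh
  replace h : HasDerivAt Real.tanh
      ((Real.cosh x * Real.cosh x - Real.sinh x * Real.sinh x) / Real.cosh x ^ 2) x := by
    rw [show Real.tanh = Real.sinh / Real.cosh from funext he]; exact h
  convert h using 2
  have := Real.cosh_sq_sub_sinh_sq x
  nlinarith

lemma tanh_lower {M a b : ℝ} (ha : |a| ≤ M) (hb : |b| ≤ M) :
    (1 / Real.cosh M) ^ 2 * |a - b| ≤ |Real.tanh a - Real.tanh b| := by
  have key : ∀ a b : ℝ, a < b → |a| ≤ M → |b| ≤ M →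
      (1 / Real.cosh M) ^ 2 * |a - b| ≤ |Real.tanh a - Real.tanh b| := by
    intro a b hab ha hb
    obtain ⟨c, hc, hderiv⟩ := exists_hasDerivAt_eq_slope Real.tanh
      (fun y => 1 / Real.cosh y ^ 2) hab
      (fun y _ => (hasDerivAt_tanh' y).continuousAt.continuousWithinAt)
      (fun y _ => hasDerivAt_tanh' y)
    have hcosh : Real.cosh c ≤ Real.cosh M := by
      rw [Real.cosh_le_cosh, abs_of_nonneg (le_trans (abs_nonneg a) ha)]
      rw [abs_le] at ha hb ⊢
      exact ⟨le_of_lt (lt_of_le_of_lt ha.1 hc.1), le_of_lt (lt_of_lt_of_le hc.2 hb.2)⟩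
    have hM0 : 0 < Real.cosh M := Real.cosh_pos M
    have hc0 : 0 < Real.cosh c := Real.cosh_pos c
    have h1 : (1 / Real.cosh M) ^ 2 ≤ 1 / Real.cosh c ^ 2 := by
      rw [div_pow, one_pow]
      exact div_le_div_of_nonneg_left one_pos.le (by positivity) (by nlinarith)
    have heq : Real.tanh b - Real.tanh a = (1 / Real.cosh c ^ 2) * (b - a) := by
      rw [hderiv, div_mul_cancel₀ _ (sub_ne_zero.mpr hab.ne')]
    have hba : 0 < b - a := by linarith
    rw [abs_sub_comm a b, abs_of_pos hba, abs_sub_comm, abs_of_pos (by rw [heq]; positivity), heq]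
    exact mul_le_mul_of_nonneg_right h1 hba.le
  rcases lt_trichotomy a b with h | h | h
  · exact key a b h ha hb
  · simp [h]
  · rw [abs_sub_comm a b, abs_sub_comm (Real.tanh a)]; exact key b a h hb ha

lemma coord_le_norm (x : E) (i : Fin 3) : |x i| ≤ ‖x‖ := by
  rw [EuclideanSpace.norm_eq]
  have h1 : |x i| = Real.sqrt (‖x i‖ ^ 2) := by
    rw [Real.sqrt_sq_eq_abs]; simp [Real.norm_eq_abs]
  rw [h1]
  apply Real.sqrt_le_sqrt
  exact Finset.single_le_sum (f := fun j => ‖x j‖ ^ 2) (fun j _ => sq_nonneg _) (Finset.mem_univ i)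

/-- Let `P` be an invertible real 3×3 matrix, `M > 0`, and `Λ ⊆ ℝ³` a set
with `‖x‖ ≤ M` for every `x ∈ Λ`.  For `g(x) = P ⬝ (tanh x₁, tanh x₂, tanh x₃)ᵀ`, the
inequality `‖g x - g x̄‖ ≥ L ‖x - x̄‖` holds for all `x, x̄ ∈ Λ` with the positive constant
`L = sech²(M)/‖P⁻¹‖`; in particular assumption (A) is fulfilled with some `L > 0`. -/
theorem assumptionA_for_tanh_coupling
    (P : Matrix (Fin 3) (Fin 3) ℝ) (hP : IsUnit P)
    (M : ℝ) (hM : 0 < M)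
    (Λ : Set E) (hΛ : ∀ x ∈ Λ, ‖x‖ ≤ M)
    (g : E → E)
    (hg : ∀ x : E, g x = Matrix.toEuclideanLin P (WithLp.toLp 2 (fun i => Real.tanh (x i)))) :
    (0 < sech M ^ 2 / specNorm P⁻¹ ∧
      ∀ x ∈ Λ, ∀ x' ∈ Λ, sech M ^ 2 / specNorm P⁻¹ * ‖x - x'‖ ≤ ‖g x - g x'‖) ∧
    ∃ L > (0 : ℝ), ∀ x ∈ Λ, ∀ x' ∈ Λ, L * ‖x - x'‖ ≤ ‖g x - g x'‖ := by
  have hdet : IsUnit P.det := (Matrix.isUnit_iff_isUnit_det P).mp hP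
  have hinv : P⁻¹ * P = 1 := Matrix.nonsing_inv_mul P hdet
  have hcomp : ∀ v : E,
      Matrix.toEuclideanCLM (𝕜 := ℝ) P⁻¹ (Matrix.toEuclideanCLM (𝕜 := ℝ) P v) = v := by
    intro v
    rw [← ContinuousLinearMap.comp_apply, ← ContinuousLinearMap.mul_def, ← map_mul, hinv,
      map_one, ContinuousLinearMap.one_apply]
  have hN : 0 < specNorm P⁻¹ := by
    rw [specNorm, norm_pos_iff]
    intro h
    have h2 := hcomp (EuclideanSpace.single (0 : Fin 3) (1 : ℝ))
    rw [h] at h2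
    simp only [ContinuousLinearMap.zero_apply] at h2
    have h3 := congrArg (fun v : E => v 0) h2
    simp [EuclideanSpace.single_apply] at h3
  have hS : 0 < sech M ^ 2 := by
    rw [sech]; positivity
  have hL : 0 < sech M ^ 2 / specNorm P⁻¹ := div_pos hS hN
  -- lower bound for CLM P
  have hPbound : ∀ v : E, ‖v‖ ≤ specNorm P⁻¹ * ‖Matrix.toEuclideanCLM (𝕜 := ℝ) P v‖ := by
    intro v
    calc ‖v‖ = ‖Matrix.toEuclideanCLM (𝕜 := ℝ) P⁻¹ (Matrix.toEuclideanCLM (𝕜 := ℝ) P v)‖ := by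
          rw [hcomp v]
      _ ≤ specNorm P⁻¹ * ‖Matrix.toEuclideanCLM (𝕜 := ℝ) P v‖ :=
          (Matrix.toEuclideanCLM (𝕜 := ℝ) P⁻¹).le_opNorm _
  have main : ∀ x ∈ Λ, ∀ x' ∈ Λ, sech M ^ 2 / specNorm P⁻¹ * ‖x - x'‖ ≤ ‖g x - g x'‖ := by
    intro x hx x' hx'
    set d : E := WithLp.toLp 2 (fun i => Real.tanh (x i) - Real.tanh (x' i)) with hd
    have hgd : g x - g x' = Matrix.toEuclideanCLM (𝕜 := ℝ) P d := by
      rw [hg, hg]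
      have h1 : ∀ A : Matrix (Fin 3) (Fin 3) ℝ, ∀ v : E,
          Matrix.toEuclideanCLM (𝕜 := ℝ) A v = Matrix.toEuclideanLin A v := by
        intro A v
        rw [← Matrix.coe_toEuclideanCLM_eq_toEuclideanLin]
        rfl
      rw [h1, ← map_sub]
      congr 1
    -- norm of d vs norm of x - x'
    have hdn : sech M ^ 2 * ‖x - x'‖ ≤ ‖d‖ := by
      rw [EuclideanSpace.norm_eq, EuclideanSpace.norm_eq]
      rw [show sech M ^ 2 = Real.sqrt ((sech M ^ 2) ^ 2) from
        (Real.sqrt_sq hS.le).symm, ← Real.sqrt_mul (by positivity)]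
      apply Real.sqrt_le_sqrt
      rw [Finset.mul_sum]
      apply Finset.sum_le_sum
      intro i _
      have hxs : |x i| ≤ M := le_trans (coord_le_norm x i) (hΛ x hx)
      have hxs' : |x' i| ≤ M := le_trans (coord_le_norm x' i) (hΛ x' hx')
      have ht := tanh_lower hxs hxs'
      have h0 : (0:ℝ) ≤ (1 / Real.cosh M) ^ 2 * |x i - x' i| := by positivity
      have hsq := mul_self_le_mul_self h0 ht
      have hd : d i = Real.tanh (x i) - Real.tanh (x' i) := rfl
      have hxx : (x - x') i = x i - x' i := rfl
      rw [hd, hxx]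
      simp only [Real.norm_eq_abs, sech]
      calc ((1 / Real.cosh M) ^ 2) ^ 2 * |x i - x' i| ^ 2
          = ((1 / Real.cosh M) ^ 2 * |x i - x' i|) * ((1 / Real.cosh M) ^ 2 * |x i - x' i|) := by
            ring
        _ ≤ |Real.tanh (x i) - Real.tanh (x' i)| * |Real.tanh (x i) - Real.tanh (x' i)| := hsq
        _ = |Real.tanh (x i) - Real.tanh (x' i)| ^ 2 := (sq _).symm
    have hdP := hPbound d
    rw [hgd]
    rw [div_mul_eq_mul_div, div_le_iff₀ hN]
    calc sech M ^ 2 * ‖x - x'‖ ≤ ‖d‖ := hdn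
      _ ≤ specNorm P⁻¹ * ‖Matrix.toEuclideanCLM (𝕜 := ℝ) P d‖ := hdP
      _ = ‖Matrix.toEuclideanCLM (𝕜 := ℝ) P d‖ * specNorm P⁻¹ := mul_comm _ _
  exact ⟨⟨hL, main⟩, ⟨_, hL, main⟩⟩
end
end

section
/- Let g : ℝ³ → ℝ³ be continuous, let L > 0, ε > 0, τ > 0, η ≥ τ/2, and let x, x̃ : [0,∞) → ℝ³ be continuous functions such that ‖g(x(η)) - g(x̃(η))‖ ≥ L‖x(η) - x̃(η)‖ and ‖x(η) - x̃(η)‖ > ε. Suppose additionally that for every t ∈ [η - τ/2, η + τ/2] and every j ∈ {1,2,3}, |(g_j(x(t)) - g_j(x̃(t))) - (g_j(x(η)) - g_j(x̃(η)))| < Lε/(2√3). Then there is an index k ∈ {1,2,3} such that |g_k(x(t)) - g_k(x̃(t))| > Lε/(2√3) for every t ∈ [η - τ/2, η + τ/2], and consequently ‖∫_{η-τ/2}^{η+τ/2} (g(x(s)) - g(x̃(s))) ds‖ > Lτε/(2√3). -/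
open Real

noncomputable section

local notation "E" => EuclideanSpace ℝ (Fin 3)

lemma abs_apply_le_norm (v : E) (k : Fin 3) : |v k| ≤ ‖v‖ := by
  rw [EuclideanSpace.norm_eq]
  have h1 : |v k| = Real.sqrt (‖v k‖ ^ 2) := by
    rw [Real.sqrt_sq_eq_abs]; simp
  rw [h1]
  apply Real.sqrt_le_sqrt
  exact Finset.single_le_sum (f := fun i => ‖v i‖ ^ 2) (fun i _ => by positivity)
    (Finset.mem_univ k)

lemma norm_le_sqrt3_max (v : E) : ∃ k : Fin 3, ‖v‖ ≤ Real.sqrt 3 * |v k| := by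
  obtain ⟨k, -, hk⟩ := Finset.exists_max_image Finset.univ (fun i => |v i|)
    ⟨0, Finset.mem_univ 0⟩
  refine ⟨k, ?_⟩
  rw [EuclideanSpace.norm_eq]
  have h1 : ∑ i, ‖v i‖ ^ 2 ≤ 3 * |v k| ^ 2 := by
    have : ∀ i : Fin 3, ‖v i‖ ^ 2 ≤ |v k| ^ 2 := fun i => by
      have := hk i (Finset.mem_univ i)
      have h0 : ‖v i‖ = |v i| := rfl
      nlinarith [abs_nonneg (v i), abs_nonneg (v k)]
    calc ∑ i, ‖v i‖ ^ 2 ≤ ∑ _i : Fin 3, |v k| ^ 2 := Finset.sum_le_sum fun i _ => this i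
    _ = 3 * |v k| ^ 2 := by rw [Fin.sum_univ_three]; ring
  calc Real.sqrt (∑ i, ‖v i‖ ^ 2) ≤ Real.sqrt (3 * |v k| ^ 2) := Real.sqrt_le_sqrt h1
  _ = Real.sqrt 3 * |v k| := by
      rw [Real.sqrt_mul (by norm_num), Real.sqrt_sq_eq_abs, abs_abs]

lemma integral_gt_of_lt {f : ℝ → ℝ} (hf : Continuous f) {a b c : ℝ} (hab : a < b)
    (h : ∀ t ∈ Set.Icc a b, c < f t) : c * (b - a) < ∫ s in a..b, f s := by
  obtain ⟨t0, ht0, hmin⟩ := isCompact_Icc.exists_isMinOn (Set.nonempty_Icc.2 hab.le)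
    hf.continuousOn
  have hm : c < f t0 := h t0 ht0
  have hint : f t0 * (b - a) ≤ ∫ s in a..b, f s := by
    have := intervalIntegral.integral_mono_on hab.le
      (intervalIntegrable_const (c := f t0) (μ := MeasureTheory.volume)) (hf.intervalIntegrable a b)
      (fun t ht => hmin ht)
    simpa [intervalIntegral.integral_const, smul_eq_mul, mul_comm] using this
  nlinarith [hint]

/-- Suppose `‖g(x(η)) - g(x̃(η))‖ ≥ L ‖x(η) - x̃(η)‖`,
`‖x(η) - x̃(η)‖ > ε`, and all the component differences `g_j(x(t)) - g_j(x̃(t))` stay within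
`Lε/(2√3)` of their values at `t = η` on the interval `[η - τ/2, η + τ/2]`.  Then some
component satisfies `|g_k(x(t)) - g_k(x̃(t))| > Lε/(2√3)` throughout this interval, and
consequently `‖∫_{η-τ/2}^{η+τ/2} (g(x(s)) - g(x̃(s))) ds‖ > Lτε/(2√3)`. -/
theorem component_lower_bound_and_integral_estimate
    (g : E → E) (hg : Continuous g)
    (L ε τ η : ℝ) (hL : 0 < L) (hε : 0 < ε) (hτ : 0 < τ) (hη : τ / 2 ≤ η)
    (x x' : ℝ → E) (hx : Continuous x) (hx' : Continuous x')
    (hgL : L * ‖x η - x' η‖ ≤ ‖g (x η) - g (x' η)‖)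
    (hsep : ε < ‖x η - x' η‖)
    (hclose : ∀ t ∈ Set.Icc (η - τ / 2) (η + τ / 2), ∀ j : Fin 3,
      |(g (x t) j - g (x' t) j) - (g (x η) j - g (x' η) j)| < L * ε / (2 * Real.sqrt 3)) :
    (∃ k : Fin 3, ∀ t ∈ Set.Icc (η - τ / 2) (η + τ / 2),
        L * ε / (2 * Real.sqrt 3) < |g (x t) k - g (x' t) k|) ∧
    L * τ * ε / (2 * Real.sqrt 3) <
      ‖∫ s in (η - τ / 2)..(η + τ / 2), (g (x s) - g (x' s))‖ := by
  have hs3 : (0:ℝ) < Real.sqrt 3 := Real.sqrt_pos.2 (by norm_num)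
  set c : ℝ := L * ε / (2 * Real.sqrt 3) with hc_def
  have hc : 0 < c := by positivity
  set v : E := g (x η) - g (x' η) with hv_def
  have hvapp : ∀ j : Fin 3, v j = g (x η) j - g (x' η) j := fun j => rfl
  -- ‖v‖ > L ε
  have hLε : L * ε < ‖v‖ := by
    calc L * ε < L * ‖x η - x' η‖ := by nlinarith
    _ ≤ ‖v‖ := hgL
  obtain ⟨k, hk⟩ := norm_le_sqrt3_max v
  have hvk : 2 * c < |v k| := by
    have h1 : L * ε < Real.sqrt 3 * |v k| := lt_of_lt_of_le hLε hk
    have h2 : 2 * c * Real.sqrt 3 = L * ε := by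
      rw [hc_def]; field_simp
    nlinarith [h1, hs3, h2]
  -- component lower bound
  have hcomp : ∀ t ∈ Set.Icc (η - τ / 2) (η + τ / 2), c < |g (x t) k - g (x' t) k| := by
    intro t ht
    have h2 : |(g (x t) k - g (x' t) k) - v k| < c := hclose t ht k
    have h4 : |v k| - |g (x t) k - g (x' t) k| ≤ |(g (x t) k - g (x' t) k) - v k| := by
      rw [abs_sub_comm (g (x t) k - g (x' t) k) (v k)]
      exact abs_sub_abs_le_abs_sub (v k) (g (x t) k - g (x' t) k)
    linarith
  refine ⟨⟨k, hcomp⟩, ?_⟩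
  -- integral estimate
  set a := η - τ / 2
  set b := η + τ / 2
  have hab : a < b := by simp only [a, b]; linarith
  have hba : b - a = τ := by simp only [a, b]; ring
  set F : ℝ → E := fun s => g (x s) - g (x' s) with hF_def
  have hFcont : Continuous F := (hg.comp hx).sub (hg.comp hx')
  have hf : Continuous (fun s => g (x s) k - g (x' s) k) :=
    ((EuclideanSpace.proj (𝕜 := ℝ) k).continuous.comp (hg.comp hx)).sub ((EuclideanSpace.proj (𝕜 := ℝ) k).continuous.comp (hg.comp hx'))
  have hproj : (∫ s in a..b, F s) k = ∫ s in a..b, (g (x s) k - g (x' s) k) := by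
    have := (EuclideanSpace.proj (𝕜 := ℝ) k).intervalIntegral_comp_comm
      (hFcont.intervalIntegrable (μ := MeasureTheory.volume) a b)
    simpa [F] using this.symm
  have habs : c * τ < |(∫ s in a..b, F s) k| := by
    rw [hproj]
    -- sign analysis
    rcases lt_or_ge 0 (v k) with hpos | hneg
    · have hlow : ∀ t ∈ Set.Icc a b, c < g (x t) k - g (x' t) k := by
        intro t ht
        have habs2 : |(g (x t) k - g (x' t) k) - v k| < c := hclose t ht k
        have h5 := abs_lt.1 habs2
        have hvk' : 2 * c < v k := by rwa [abs_of_pos hpos] at hvk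
        linarith [h5.1]
      have := integral_gt_of_lt hf hab hlow
      rw [hba] at this
      have hpos2 : 0 < ∫ s in a..b, (g (x s) k - g (x' s) k) := by nlinarith
      rw [abs_of_pos hpos2]; linarith [mul_comm c τ ▸ this]
    · have hneg' : v k < 0 := by
        rcases lt_or_eq_of_le hneg with h | h
        · exact h
        · exfalso; rw [h] at hvk; simp at hvk; linarith
      have hlow : ∀ t ∈ Set.Icc a b, c < -(g (x t) k - g (x' t) k) := by
        intro t ht
        have habs2 : |(g (x t) k - g (x' t) k) - v k| < c := hclose t ht k
        have h5 := abs_lt.1 habs2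
        have hvk' : 2 * c < -(v k) := by rwa [abs_of_neg hneg'] at hvk
        linarith [h5.2]
      have := integral_gt_of_lt hf.neg hab hlow
      rw [hba] at this
      simp only [Pi.neg_apply, intervalIntegral.integral_neg] at this
      have hneg2 : (∫ s in a..b, (g (x s) k - g (x' s) k)) < 0 := by nlinarith
      rw [abs_of_neg hneg2]; linarith
  have hfinal : |(∫ s in a..b, F s) k| ≤ ‖∫ s in a..b, F s‖ :=
    abs_apply_le_norm _ k
  have : L * τ * ε / (2 * Real.sqrt 3) = c * τ := by rw [hc_def]; ring
  rw [this]
  exact lt_of_lt_of_le habs hfinal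
end
end

section
/- Let P be an invertible real 3×3 matrix and define g : ℝ³ → ℝ³ by g(x) = P·(tanh(x₁), tanh(x₂), tanh(x₃))ᵀ. Then for every x, x̄ ∈ ℝ³, ‖g(x) - g(x̄)‖ ≥ (1/‖P⁻¹‖)·(Σ_{j=1}^{3} sech⁴(p_j)·(x_j - x̄_j)²)^{1/2}, where for each j, p_j is some point between x_j and x̄_j such that tanh(x_j) - tanh(x̄_j) = sech²(p_j)·(x_j - x̄_j). -/
open Real

noncomputable section

local notation "E" => EuclideanSpace ℝ (Fin 3)

lemma hasDerivAt_tanh'_s15 (t : ℝ) : HasDerivAt Real.tanh (sech t ^ 2) t := by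
  have h1 : HasDerivAt Real.sinh (Real.cosh t) t := Real.hasDerivAt_sinh t
  have h2 : HasDerivAt Real.cosh (Real.sinh t) t := Real.hasDerivAt_cosh t
  have hc : Real.cosh t ≠ 0 := ne_of_gt (Real.cosh_pos t)
  have := h1.div h2 hc
  have heq : (Real.cosh t * Real.cosh t - Real.sinh t * Real.sinh t) / Real.cosh t ^ 2
      = sech t ^ 2 := by
    have := Real.cosh_sq_sub_sinh_sq t
    field_simp [sech]
    simp only [sech, one_div, inv_pow]
    rw [mul_inv_cancel₀ (pow_ne_zero 2 hc)]
    linarith [this]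
  rw [heq] at this
  exact this.congr_of_eventuallyEq (by filter_upwards with y using (Real.tanh_eq_sinh_div_cosh y))

lemma mvt_tanh (a b : ℝ) : ∃ p ∈ Set.uIcc a b,
    Real.tanh a - Real.tanh b = sech p ^ 2 * (a - b) := by
  rcases eq_or_ne a b with rfl | hab
  · exact ⟨a, Set.left_mem_uIcc, by ring⟩
  · set u := min a b
    set v := max a b
    have huv : u < v := min_lt_max.mpr hab
    obtain ⟨c, hc, hdc⟩ := exists_hasDerivAt_eq_slope Real.tanh (fun t => sech t ^ 2) huv
      (fun t _ => (hasDerivAt_tanh'_s15 t).continuousAt.continuousWithinAt)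
      (fun t _ => hasDerivAt_tanh'_s15 t)
    refine ⟨c, ?_, ?_⟩
    · rw [← Set.Icc_min_max]
      exact Set.Ioo_subset_Icc_self hc
    · have hne : v - u ≠ 0 := sub_ne_zero.mpr (ne_of_gt huv)
      have h1 : Real.tanh v - Real.tanh u = sech c ^ 2 * (v - u) := by
        field_simp at hdc
        linarith [hdc]
      rcases min_cases a b with ⟨h1', h2'⟩ | ⟨h1', h2'⟩ <;>
        rcases max_cases a b with ⟨h3', h4'⟩ | ⟨h3', h4'⟩ <;>
        simp only [u, v, h1', h3'] at h1 ⊢ <;> linarith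

/-- For `g(x) = P ⬝ (tanh x₁, tanh x₂, tanh x₃)ᵀ` with `P` invertible,
and any `x, x̄ ∈ ℝ³`, there are mean-value points `p_j` between `x_j` and `x̄_j` with
`tanh x_j - tanh x̄_j = sech²(p_j)(x_j - x̄_j)` such that
`‖g x - g x̄‖ ≥ (1/‖P⁻¹‖) (∑_j sech⁴(p_j)(x_j - x̄_j)²)^{1/2}`. -/
theorem coupling_lower_bound_via_mean_value
    (P : Matrix (Fin 3) (Fin 3) ℝ) (hP : IsUnit P)
    (g : E → E)
    (hg : ∀ x : E, g x = Matrix.toEuclideanLin P (WithLp.toLp 2 (fun i => Real.tanh (x i)))) :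
    ∀ x x' : E, ∃ p : Fin 3 → ℝ,
      (∀ j, p j ∈ Set.uIcc (x j) (x' j) ∧
        Real.tanh (x j) - Real.tanh (x' j) = sech (p j) ^ 2 * (x j - x' j)) ∧
      1 / specNorm P⁻¹ *
          Real.sqrt (∑ j, sech (p j) ^ 4 * (x j - x' j) ^ 2) ≤ ‖g x - g x'‖ := by
  intro x x'
  choose p hp1 hp2 using fun j => mvt_tanh (x j) (x' j)
  refine ⟨p, fun j => ⟨hp1 j, hp2 j⟩, ?_⟩
  -- the difference vector
  set w : E := (WithLp.equiv 2 (Fin 3 → ℝ)).symm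
      (fun j => Real.tanh (x j) - Real.tanh (x' j)) with hw
  have hdet : IsUnit P.det := (Matrix.isUnit_iff_isUnit_det P).mp hP
  have hinvmul : P⁻¹ * P = 1 := Matrix.nonsing_inv_mul P hdet
  -- g x - g x' = toEuclideanCLM P w
  have hgw : g x - g x' = Matrix.toEuclideanCLM (𝕜 := ℝ) P w := by
    rw [hg, hg]
    have := Matrix.coe_toEuclideanCLM_eq_toEuclideanLin (𝕜 := ℝ) (n := Fin 3) P
    have happ : ∀ v : E, Matrix.toEuclideanCLM (𝕜 := ℝ) P v = Matrix.toEuclideanLin P v := by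
      intro v; rw [← this]; rfl
    rw [happ]
    rw [← map_sub]
    congr 1
  -- recover w from the image
  have hback : Matrix.toEuclideanCLM (𝕜 := ℝ) P⁻¹ (Matrix.toEuclideanCLM (𝕜 := ℝ) P w) = w := by
    have : Matrix.toEuclideanCLM (𝕜 := ℝ) P⁻¹ * Matrix.toEuclideanCLM (𝕜 := ℝ) P = 1 := by
      rw [← map_mul, hinvmul, map_one]
    calc Matrix.toEuclideanCLM (𝕜 := ℝ) P⁻¹ (Matrix.toEuclideanCLM (𝕜 := ℝ) P w)
        = (Matrix.toEuclideanCLM (𝕜 := ℝ) P⁻¹ * Matrix.toEuclideanCLM (𝕜 := ℝ) P) w := rfl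
      _ = w := by rw [this]; rfl
  have hwle : ‖w‖ ≤ specNorm P⁻¹ * ‖g x - g x'‖ := by
    rw [hgw]
    calc ‖w‖ = ‖Matrix.toEuclideanCLM (𝕜 := ℝ) P⁻¹ (Matrix.toEuclideanCLM (𝕜 := ℝ) P w)‖ := by
          rw [hback]
      _ ≤ specNorm P⁻¹ * ‖Matrix.toEuclideanCLM (𝕜 := ℝ) P w‖ :=
          (Matrix.toEuclideanCLM (𝕜 := ℝ) P⁻¹).le_opNorm _
  -- positivity of specNorm P⁻¹
  have hPinv_ne : P⁻¹ ≠ 0 := by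
    intro h
    rw [h, zero_mul] at hinvmul
    exact (one_ne_zero : (1 : Matrix (Fin 3) (Fin 3) ℝ) ≠ 0) hinvmul.symm
  have hpos : 0 < specNorm P⁻¹ := by
    have hle : (1:ℝ) ≤ specNorm P⁻¹ * specNorm P := by
      have h := norm_mul_le (Matrix.toEuclideanCLM (𝕜 := ℝ) P⁻¹)
        (Matrix.toEuclideanCLM (𝕜 := ℝ) P)
      rw [← map_mul, hinvmul, map_one, norm_one] at h
      exact h
    by_contra h
    push_neg at h
    have h0 : specNorm P⁻¹ = 0 := le_antisymm h (norm_nonneg _)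
    rw [h0, zero_mul] at hle
    linarith
  -- compute ‖w‖
  have hwnorm : ‖w‖ = Real.sqrt (∑ j, sech (p j) ^ 4 * (x j - x' j) ^ 2) := by
    rw [EuclideanSpace.norm_eq]
    congr 1
    apply Finset.sum_congr rfl
    intro j _
    have : w j = sech (p j) ^ 2 * (x j - x' j) := hp2 j ▸ rfl
    rw [this, Real.norm_eq_abs, sq_abs]
    ring
  rw [← hwnorm, div_mul_eq_mul_div, one_mul, div_le_iff₀ hpos]
  linarith [hwle]
end
end
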